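/- Let k₁,k₂>0, K≥2, J(z)=k₁/z¹²−k₂/z⁶ for z>0 and +∞ for z≤0, J_j(z):=J(jz), γ:=(2k₁/k₂)^{1/6}·((Σ_{j=1}^K j^{-12})/(Σ_{j=1}^K j^{-6}))^{1/6}, c_j:=−jJ'(jγ)/J'(γ), and J_{0,j}(z):=J_j(z)+(c_j/j)·inf{Σ_{s=1}^j J_1(z_s) : Σ_{s=1}^j z_s=jz} for j=2,…,K. Then for every j=2,…,K: liminf_{z→+∞} J_{0,j}(z) > J_{0,j}(γ). -/

import Mathlib

open Filter Finset Set

noncomputable section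

/-- The Lennard-Jones potential, extended by `+∞` on `(-∞,0]`. -/
def LJ (k₁ k₂ : ℝ) (z : ℝ) : EReal :=
  if 0 < z then ((k₁ / z ^ 12 - k₂ / z ^ 6 : ℝ) : EReal) else ⊤

/-- The real-valued Lennard-Jones formula (used for derivatives on `(0,∞)`). -/
def LJr (k₁ k₂ : ℝ) (z : ℝ) : ℝ := k₁ / z ^ 12 - k₂ / z ^ 6

/-- The unique minimizer `γ` of the Cauchy–Born energy density `J_CB(z)=Σ_{j=1}^K J(jz)`. -/
def gammaLJ (k₁ k₂ : ℝ) (K : ℕ) : ℝ :=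
  (2 * k₁ / k₂) ^ ((1 : ℝ) / 6) *
    ((∑ j ∈ Finset.Icc 1 K, 1 / (j : ℝ) ^ 12) /
      (∑ j ∈ Finset.Icc 1 K, 1 / (j : ℝ) ^ 6)) ^ ((1 : ℝ) / 6)

/-- The splitting coefficients `c_j := -j·J'(jγ)/J'(γ)`, `j = 2,…,K`. -/
def cLJ (k₁ k₂ : ℝ) (K : ℕ) (j : ℕ) : ℝ :=
  -((j : ℝ) * deriv (LJr k₁ k₂) ((j : ℝ) * gammaLJ k₁ k₂ K)) /
    deriv (LJr k₁ k₂) (gammaLJ k₁ k₂ K)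

/-- `inf{Σ_{s=1}^j J_1(z_s) : Σ_{s=1}^j z_s = jz}`. -/
def infConv (k₁ k₂ : ℝ) (j : ℕ) (z : ℝ) : EReal :=
  sInf {y : EReal | ∃ p : Fin j → ℝ, (∑ s, p s) = j * z ∧ y = ∑ s, LJ k₁ k₂ (p s)}

/-- The effective potential `J_{0,j}(z) = J_j(z) + (c_j/j)·inf{Σ J_1(z_s) : Σ z_s = jz}`. -/
def J0LJ (k₁ k₂ : ℝ) (K j : ℕ) (z : ℝ) : EReal :=
  LJ k₁ k₂ ((j : ℝ) * z) + ((cLJ k₁ k₂ K j / j : ℝ) : EReal) * infConv k₁ k₂ j z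

/-!
At `z = γ` the constant splitting `z_s = γ` bounds the infimum by `j J(γ)`, so
`J_{0,j}(γ) ≤ J(jγ) + c_j J(γ)`. As `z → ∞`, one of the `z_s` must be at least `z`, and every
other one contributes at least `min J = -k₂²/(4k₁)`; since `c_j > 0`, the liminf is at least
`c_j (j-1)/j · min J`. With `γ⁶ = (2k₁/k₂) r`, `r = Σ j⁻¹²/Σ j⁻⁶ ∈ [1/2, 1)`, both sides are
explicit rational functions of `j⁶` and `r`, and the strict inequality between them is elementary.
-/

open Topology

namespace LennardJones

variable {k₁ k₂ : ℝ}

/-- `min J`, attained at `z⁶ = 2k₁/k₂`. -/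
def LJmin (k₁ k₂ : ℝ) : ℝ := -(k₂ ^ 2 / (4 * k₁))

def sumRatio (K : ℕ) : ℝ :=
  (∑ j ∈ Finset.Icc 1 K, 1 / (j : ℝ) ^ 12) / (∑ j ∈ Finset.Icc 1 K, 1 / (j : ℝ) ^ 6)

theorem LJ_of_pos {w : ℝ} (hw : 0 < w) : LJ k₁ k₂ w = LJr k₁ k₂ w := by
  simp [LJ, LJr, hw]

theorem LJmin_le_LJr (hk₁ : 0 < k₁) (w : ℝ) : LJmin k₁ k₂ ≤ LJr k₁ k₂ w := by
  rw [LJmin, LJr, show k₁ / w ^ 12 - k₂ / w ^ 6 = k₁ * ((w ^ 6)⁻¹) ^ 2 - k₂ * (w ^ 6)⁻¹ by ring]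
  generalize (w ^ 6)⁻¹ = t
  have hsq : k₁ * t ^ 2 - k₂ * t + k₂ ^ 2 / (4 * k₁) = (2 * k₁ * t - k₂) ^ 2 / (4 * k₁) := by
    field_simp
    ring
  have : 0 ≤ (2 * k₁ * t - k₂) ^ 2 / (4 * k₁) := by positivity
  linarith

theorem LJmin_le_LJ (hk₁ : 0 < k₁) (w : ℝ) : (LJmin k₁ k₂ : EReal) ≤ LJ k₁ k₂ w := by
  rcases lt_or_ge 0 w with hw | hw
  · rw [LJ_of_pos hw]
    exact EReal.coe_le_coe (LJmin_le_LJr hk₁ w)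
  · simp [LJ, not_lt.2 hw]

theorem neg_div_pow_six_le_LJr (hk₁ : 0 ≤ k₁) (hk₂ : 0 ≤ k₂) {z w : ℝ} (hz : 0 < z)
    (hzw : z ≤ w) : -(k₂ / z ^ 6) ≤ LJr k₁ k₂ w := by
  have h₁ : 0 ≤ k₁ / w ^ 12 := by positivity
  have h₂ : k₂ / w ^ 6 ≤ k₂ / z ^ 6 := by gcongr
  simp only [LJr]
  linarith

theorem hasDerivAt_LJr {z : ℝ} (hz : z ≠ 0) :
    HasDerivAt (LJr k₁ k₂) (-12 * k₁ / z ^ 13 + 6 * k₂ / z ^ 7) z := by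
  have h : HasDerivAt (LJr k₁ k₂) _ z :=
    ((hasDerivAt_const z k₁).div (hasDerivAt_pow 12 z) (pow_ne_zero 12 hz)).sub
      ((hasDerivAt_const z k₂).div (hasDerivAt_pow 6 z) (pow_ne_zero 6 hz))
  convert h using 1
  field_simp
  ring

theorem LJr_of_pow_six_eq (hk₁ : k₁ ≠ 0) (hk₂ : k₂ ≠ 0) {w s : ℝ} (hs : s ≠ 0)
    (hw : w ^ 6 = 2 * k₁ / k₂ * s) : LJr k₁ k₂ w = LJmin k₁ k₂ * ((2 * s - 1) / s ^ 2) := by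
  rw [LJr, LJmin, show w ^ 12 = (w ^ 6) ^ 2 by ring, hw]
  field_simp
  ring

theorem deriv_LJr_of_pow_six_eq (hk₂ : k₂ ≠ 0) {w s : ℝ} (hw₀ : w ≠ 0)
    (hw : w ^ 6 = 2 * k₁ / k₂ * s) : deriv (LJr k₁ k₂) w = 12 * k₁ * (s - 1) / w ^ 13 := by
  rw [(hasDerivAt_LJr hw₀).deriv, eq_div_iff (pow_ne_zero 13 hw₀), add_mul,
    div_mul_cancel₀ _ (pow_ne_zero 13 hw₀), show w ^ 13 = w ^ 7 * w ^ 6 by ring,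
    ← mul_assoc, div_mul_cancel₀ _ (pow_ne_zero 7 hw₀), hw]
  field_simp
  ring

variable {K j : ℕ} {z : ℝ}

theorem infConv_le_mul_LJr (hz : 0 < z) : infConv k₁ k₂ j z ≤ ((j * LJr k₁ k₂ z : ℝ) : EReal) :=
  sInf_le ⟨fun _ => z, by simp, by simp [LJ_of_pos hz]⟩

theorem le_infConv (hk₁ : 0 < k₁) (hk₂ : 0 ≤ k₂) (hj : 0 < j) (hz : 0 < z) :
    (((j - 1) * LJmin k₁ k₂ - k₂ / z ^ 6 : ℝ) : EReal) ≤ infConv k₁ k₂ j z := by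
  refine le_sInf ?_
  rintro _ ⟨p, hp, rfl⟩
  obtain ⟨s₀, -, hs₀⟩ : ∃ s ∈ Finset.univ, z ≤ p s :=
    exists_le_of_sum_le (f := fun _ => z) (g := p) ⟨⟨0, hj⟩, mem_univ _⟩ (by simp [hp])
  rw [← add_sum_erase _ _ (mem_univ s₀)]
  calc (((j - 1) * LJmin k₁ k₂ - k₂ / z ^ 6 : ℝ) : EReal)
      = ((-(k₂ / z ^ 6) : ℝ) : EReal) + ∑ _s ∈ univ.erase s₀, (LJmin k₁ k₂ : EReal) := by
        rw [sum_const, card_erase_of_mem (mem_univ _), card_univ, Fintype.card_fin,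
          ← EReal.coe_nsmul, ← EReal.coe_add, nsmul_eq_mul, Nat.cast_sub hj]
        ring_nf
    _ ≤ _ := by
      gcongr with s
      · rw [LJ_of_pos (hz.trans_le hs₀)]
        exact EReal.coe_le_coe (neg_div_pow_six_le_LJr hk₁.le hk₂ hz hs₀)
      · exact LJmin_le_LJ hk₁ _

theorem coe_toReal_infConv (hk₁ : 0 < k₁) (hk₂ : 0 ≤ k₂) (hj : 0 < j) (hz : 0 < z) :
    ((infConv k₁ k₂ j z).toReal : EReal) = infConv k₁ k₂ j z :=
  EReal.coe_toReal (ne_top_of_le_ne_top (EReal.coe_ne_top _) (infConv_le_mul_LJr hz))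
    (ne_bot_of_le_ne_bot (EReal.coe_ne_bot _) (le_infConv hk₁ hk₂ hj hz))

theorem J0LJ_eq_coe (hk₁ : 0 < k₁) (hk₂ : 0 ≤ k₂) (hj : 0 < j) (hz : 0 < z) :
    J0LJ k₁ k₂ K j z =
      ((LJr k₁ k₂ (j * z) + cLJ k₁ k₂ K j / j * (infConv k₁ k₂ j z).toReal : ℝ) : EReal) := by
  rw [J0LJ, LJ_of_pos (by positivity), EReal.coe_add, EReal.coe_mul,
    coe_toReal_infConv hk₁ hk₂ hj hz]

theorem J0LJ_le (hk₁ : 0 < k₁) (hk₂ : 0 ≤ k₂) (hj : 0 < j) (hc : 0 ≤ cLJ k₁ k₂ K j)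
    (hz : 0 < z) :
    J0LJ k₁ k₂ K j z ≤ ((LJr k₁ k₂ (j * z) + cLJ k₁ k₂ K j * LJr k₁ k₂ z : ℝ) : EReal) := by
  have hI : (infConv k₁ k₂ j z).toReal ≤ j * LJr k₁ k₂ z := by
    rw [← EReal.coe_le_coe_iff, coe_toReal_infConv hk₁ hk₂ hj hz]
    exact infConv_le_mul_LJr hz
  rw [J0LJ_eq_coe hk₁ hk₂ hj hz, EReal.coe_le_coe_iff]
  calc LJr k₁ k₂ (j * z) + cLJ k₁ k₂ K j / j * (infConv k₁ k₂ j z).toReal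
      ≤ LJr k₁ k₂ (j * z) + cLJ k₁ k₂ K j / j * (j * LJr k₁ k₂ z) := by gcongr
    _ = _ := by field_simp

theorem le_J0LJ (hk₁ : 0 < k₁) (hk₂ : 0 ≤ k₂) (hj : 0 < j) (hc : 0 ≤ cLJ k₁ k₂ K j)
    (hz : 0 < z) :
    ((cLJ k₁ k₂ K j / j * ((j - 1) * LJmin k₁ k₂) - (1 + cLJ k₁ k₂ K j / j) * (k₂ / z ^ 6) : ℝ)
      : EReal) ≤ J0LJ k₁ k₂ K j z := by
  have hI : (j - 1) * LJmin k₁ k₂ - k₂ / z ^ 6 ≤ (infConv k₁ k₂ j z).toReal := by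
    rw [← EReal.coe_le_coe_iff, coe_toReal_infConv hk₁ hk₂ hj hz]
    exact le_infConv hk₁ hk₂ hj hz
  have hJ : -(k₂ / z ^ 6) ≤ LJr k₁ k₂ (j * z) :=
    neg_div_pow_six_le_LJr hk₁.le hk₂ hz (le_mul_of_one_le_left hz.le (by exact_mod_cast hj))
  rw [J0LJ_eq_coe hk₁ hk₂ hj hz, EReal.coe_le_coe_iff]
  have := mul_le_mul_of_nonneg_left hI (by positivity : 0 ≤ cLJ k₁ k₂ K j / j)
  linarith

theorem le_liminf_J0LJ (hk₁ : 0 < k₁) (hk₂ : 0 ≤ k₂) (hj : 0 < j) (hc : 0 ≤ cLJ k₁ k₂ K j) :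
    ((cLJ k₁ k₂ K j / j * ((j - 1) * LJmin k₁ k₂) : ℝ) : EReal) ≤
      liminf (fun z : ℝ => J0LJ k₁ k₂ K j z) atTop := by
  set M := cLJ k₁ k₂ K j / j * ((j - 1) * LJmin k₁ k₂)
  have hlim : Tendsto (fun z : ℝ => M - (1 + cLJ k₁ k₂ K j / j) * (k₂ / z ^ 6)) atTop (𝓝 M) := by
    have h := tendsto_const_nhds (x := M) |>.sub <|
      ((tendsto_pow_atTop (by norm_num : 6 ≠ 0)).const_div_atTop k₂).const_mul
        (1 + cLJ k₁ k₂ K j / j)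
    simpa using h
  calc (M : EReal) = liminf (fun z : ℝ => ((M - (1 + cLJ k₁ k₂ K j / j) * (k₂ / z ^ 6) : ℝ)
        : EReal)) atTop := (EReal.tendsto_coe.2 hlim).liminf_eq.symm
    _ ≤ _ := liminf_le_liminf ((eventually_gt_atTop 0).mono fun _ hz => le_J0LJ hk₁ hk₂ hj hc hz)

theorem sum_Icc_one_div_pow_six_le_two (K : ℕ) : ∑ i ∈ Finset.Icc 1 K, 1 / (i : ℝ) ^ 6 ≤ 2 := by
  have hIoo : Finset.Ioo 0 (K + 1) = Finset.Icc 1 K := by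
    ext i
    simp only [Finset.mem_Ioo, Finset.mem_Icc]
    omega
  calc ∑ i ∈ Finset.Icc 1 K, 1 / (i : ℝ) ^ 6 ≤ ∑ i ∈ Finset.Ioo 0 (K + 1), ((i : ℝ) ^ 2)⁻¹ := by
        rw [hIoo]
        refine sum_le_sum fun i hi => ?_
        have hi : (1 : ℝ) ≤ i := by exact_mod_cast (Finset.mem_Icc.1 hi).1
        rw [← one_div]
        exact one_div_pow_le_one_div_pow_of_le hi (by norm_num)
    _ ≤ 2 / ((0 : ℕ) + 1) := sum_Ioo_inv_sq_le 0 (K + 1)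
    _ = 2 := by norm_num

theorem one_le_sum_Icc_one_div_pow (n : ℕ) (hK : 1 ≤ K) :
    1 ≤ ∑ i ∈ Finset.Icc 1 K, 1 / (i : ℝ) ^ n :=
  calc (1 : ℝ) = 1 / ((1 : ℕ) : ℝ) ^ n := by norm_num
    _ ≤ _ := single_le_sum (f := fun i : ℕ => 1 / (i : ℝ) ^ n) (fun i _ => by positivity)
      (Finset.mem_Icc.2 ⟨le_rfl, hK⟩)

theorem one_half_le_sumRatio (hK : 1 ≤ K) : 1 / 2 ≤ sumRatio K := by
  have h12 := one_le_sum_Icc_one_div_pow 12 hK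
  have h6 := sum_Icc_one_div_pow_six_le_two K
  rw [sumRatio, le_div_iff₀ (by linarith [one_le_sum_Icc_one_div_pow 6 hK])]
  linarith

theorem sumRatio_lt_one (hK : 2 ≤ K) : sumRatio K < 1 := by
  rw [sumRatio, div_lt_one (by linarith [one_le_sum_Icc_one_div_pow 6 (by omega : 1 ≤ K)])]
  refine sum_lt_sum (fun i hi => ?_) ⟨2, Finset.mem_Icc.2 ⟨by norm_num, hK⟩, by norm_num⟩
  have hi : (1 : ℝ) ≤ i := by exact_mod_cast (Finset.mem_Icc.1 hi).1
  exact one_div_pow_le_one_div_pow_of_le hi (by norm_num)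

theorem gammaLJ_pow_six (hk₁ : 0 ≤ k₁) (hk₂ : 0 ≤ k₂) :
    gammaLJ k₁ k₂ K ^ 6 = 2 * k₁ / k₂ * sumRatio K := by
  have hr : 0 ≤ sumRatio K := by unfold sumRatio; positivity
  rw [gammaLJ, ← sumRatio, ← Real.mul_rpow (by positivity) hr, ← Real.rpow_natCast,
    ← Real.rpow_mul (by positivity)]
  norm_num

theorem gammaLJ_pos (hk₁ : 0 < k₁) (hk₂ : 0 < k₂) (hK : 1 ≤ K) : 0 < gammaLJ k₁ k₂ K := by
  have hr : 0 < sumRatio K := by linarith [one_half_le_sumRatio hK]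
  rw [gammaLJ, ← sumRatio]
  positivity

theorem mul_gammaLJ_pow_six (hk₁ : 0 ≤ k₁) (hk₂ : 0 ≤ k₂) (x : ℝ) :
    (x * gammaLJ k₁ k₂ K) ^ 6 = 2 * k₁ / k₂ * (x ^ 6 * sumRatio K) := by
  rw [mul_pow, gammaLJ_pow_six hk₁ hk₂]
  ring

theorem cLJ_eq (hk₁ : 0 < k₁) (hk₂ : 0 < k₂) (hK : 2 ≤ K) (hj : 0 < j) :
    cLJ k₁ k₂ K j = (j ^ 6 * sumRatio K - 1) / ((j ^ 6) ^ 2 * (1 - sumRatio K)) := by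
  have hγ := gammaLJ_pos hk₁ hk₂ (by omega : 1 ≤ K)
  have hγ6 := gammaLJ_pow_six (K := K) hk₁.le hk₂.le
  have hr : sumRatio K - 1 ≠ 0 := (sub_neg.2 (sumRatio_lt_one hK)).ne
  have hr' : 1 - sumRatio K ≠ 0 := (sub_pos.2 (sumRatio_lt_one hK)).ne'
  rw [cLJ, deriv_LJr_of_pow_six_eq hk₂.ne' hγ.ne' hγ6,
    deriv_LJr_of_pow_six_eq hk₂.ne' (by positivity) (mul_gammaLJ_pow_six hk₁.le hk₂.le j)]
  field_simp
  ring

theorem cLJ_pos (hk₁ : 0 < k₁) (hk₂ : 0 < k₂) (hK : 2 ≤ K) (hj : 2 ≤ j) : 0 < cLJ k₁ k₂ K j := by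
  have hr := one_half_le_sumRatio (by omega : 1 ≤ K)
  have hr₁ := sub_pos.2 (sumRatio_lt_one hK)
  have hm : (2 : ℝ) ^ 6 ≤ j ^ 6 := pow_le_pow_left₀ (by norm_num) (by exact_mod_cast hj) 6
  rw [cLJ_eq hk₁ hk₂ hK (by omega)]
  exact div_pos (by nlinarith) (by positivity)

/-- `J(jγ) + c_j J(γ) < c_j (j-1)/j · min J`, divided by `min J < 0`, with `m = j⁶`. -/
theorem lt_split_energy {j m r c : ℝ} (hj : 1 ≤ j) (hm : 1 < m) (hr₀ : 0 < r) (hr₁ : r < 1)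
    (hc : c = (m * r - 1) / (m ^ 2 * (1 - r))) :
    c / j * (j - 1) < (2 * (m * r) - 1) / (m * r) ^ 2 + c * ((2 * r - 1) / r ^ 2) := by
  have hj₀ : 0 < j := by linarith
  have h1r : 0 < 1 - r := by linarith
  have hrm : r ^ 2 * (m * r - 1) ≤ r * (m - 1) := by
    nlinarith [mul_nonneg (mul_nonneg hr₀.le h1r.le) (show (0 : ℝ) ≤ m * (1 + r) - 1 by nlinarith)]
  have key : 0 < j * r * (m - 1) - (j - 1) * r ^ 2 * (m * r - 1) := by
    nlinarith [mul_le_mul_of_nonneg_left hrm (show (0 : ℝ) ≤ j - 1 by linarith),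
      mul_pos hr₀ (show (0 : ℝ) < m - 1 by linarith)]
  rw [hc, ← sub_pos]
  have hexpand : (2 * (m * r) - 1) / (m * r) ^ 2
        + (m * r - 1) / (m ^ 2 * (1 - r)) * ((2 * r - 1) / r ^ 2)
        - (m * r - 1) / (m ^ 2 * (1 - r)) / j * (j - 1)
      = (j * r * (m - 1) - (j - 1) * r ^ 2 * (m * r - 1)) / (m ^ 2 * r ^ 2 * (1 - r) * j) := by
    field_simp
    ring
  rw [hexpand]
  positivity

theorem LJr_add_cLJ_mul_lt (hk₁ : 0 < k₁) (hk₂ : 0 < k₂) (hK : 2 ≤ K) (hj : 2 ≤ j) :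
    LJr k₁ k₂ (j * gammaLJ k₁ k₂ K) + cLJ k₁ k₂ K j * LJr k₁ k₂ (gammaLJ k₁ k₂ K) <
      cLJ k₁ k₂ K j / j * ((j - 1) * LJmin k₁ k₂) := by
  have hγ6 := gammaLJ_pow_six (K := K) hk₁.le hk₂.le
  set r := sumRatio K
  set c := cLJ k₁ k₂ K j
  have hr : 0 < r := by linarith [one_half_le_sumRatio (by omega : 1 ≤ K)]
  have hm : (2 : ℝ) ^ 6 ≤ j ^ 6 := pow_le_pow_left₀ (by norm_num) (by exact_mod_cast hj) 6
  have hmin : LJmin k₁ k₂ < 0 := by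
    have : 0 < k₂ ^ 2 / (4 * k₁) := by positivity
    simpa only [LJmin, Left.neg_neg_iff] using this
  have hsplit := lt_split_energy (j := j) (Nat.one_le_cast.2 (by omega)) (by linarith) hr
    (sumRatio_lt_one hK) (cLJ_eq hk₁ hk₂ hK (by omega))
  rw [LJr_of_pow_six_eq hk₁.ne' hk₂.ne' (by positivity) (mul_gammaLJ_pow_six hk₁.le hk₂.le j),
    LJr_of_pow_six_eq hk₁.ne' hk₂.ne' hr.ne' hγ6]
  calc LJmin k₁ k₂ * ((2 * (j ^ 6 * r) - 1) / (j ^ 6 * r) ^ 2)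
        + c * (LJmin k₁ k₂ * ((2 * r - 1) / r ^ 2))
      = LJmin k₁ k₂ * ((2 * (j ^ 6 * r) - 1) / (j ^ 6 * r) ^ 2 + c * ((2 * r - 1) / r ^ 2)) := by
        ring
    _ < LJmin k₁ k₂ * (c / j * (j - 1)) := mul_lt_mul_of_neg_left hsplit hmin
    _ = c / j * ((j - 1) * LJmin k₁ k₂) := by ring

end LennardJones

open LennardJones in
/-- assumption (viii) for Lennard-Jones potentials: for every `j = 2,…,K`,
`liminf_{z→+∞} J_{0,j}(z) > J_{0,j}(γ)`. -/
theorem liminf_effective_potential_at_top (k₁ k₂ : ℝ) (hk₁ : 0 < k₁) (hk₂ : 0 < k₂)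
    (K : ℕ) (hK : 2 ≤ K) :
    ∀ j ∈ Finset.Icc 2 K,
      J0LJ k₁ k₂ K j (gammaLJ k₁ k₂ K) <
        Filter.liminf (fun z : ℝ => J0LJ k₁ k₂ K j z) Filter.atTop := by
  intro j hj
  have hj₂ := (Finset.mem_Icc.1 hj).1
  have hc := (cLJ_pos hk₁ hk₂ hK hj₂).le
  calc J0LJ k₁ k₂ K j (gammaLJ k₁ k₂ K)
      ≤ ((LJr k₁ k₂ (j * gammaLJ k₁ k₂ K) + cLJ k₁ k₂ K j * LJr k₁ k₂ (gammaLJ k₁ k₂ K) : ℝ)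
          : EReal) := J0LJ_le hk₁ hk₂.le (by omega) hc (gammaLJ_pos hk₁ hk₂ (by omega))
    _ < ((cLJ k₁ k₂ K j / j * ((j - 1) * LJmin k₁ k₂) : ℝ) : EReal) :=
        EReal.coe_lt_coe_iff.2 (LJr_add_cLJ_mul_lt hk₁ hk₂ hK hj₂)
    _ ≤ _ := le_liminf_J0LJ hk₁ hk₂.le (by omega) hc
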